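/- Let F be an algebraically closed field, e₁ = (1,0,0), e₂ = (0,1,0), and k₁, k₂ ≥ 2 integers. For A ∈ O(F), there exist X, Y ∈ O(F) with A = (0, e₁; 0, 0)·X^{k₁} + (0, e₂; 0, 0)·Y^{k₂} if and only if A has the form (α, (b₁,b₂,0); c, 0), i.e. the third coordinate of the upper-right vector and the lower-right scalar of A both vanish. -/
import Mathlib


/-- Zorn vector matrices: the split octonion algebra over `F`. -/
structure Oct (F : Type*) where
  a : F              -- upper-left scalar η
  b : Fin 3 → F      -- upper-right vector x
  c : Fin 3 → F      -- lower-left vector y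
  d : F              -- lower-right scalar ζ

namespace Oct

variable {F : Type*} [Field F]

/-- standard bilinear form on F^3 -/
def dot (x y : Fin 3 → F) : F := x 0 * y 0 + x 1 * y 1 + x 2 * y 2

/-- cross product on F^3, satisfying ⟨x ∧ y, z⟩ = det(x,y,z) -/
def cross (x y : Fin 3 → F) : Fin 3 → F :=
  ![x 1 * y 2 - x 2 * y 1, x 2 * y 0 - x 0 * y 2, x 0 * y 1 - x 1 * y 0]

instance : Add (Oct F) :=
  ⟨fun A B => ⟨A.a + B.a, A.b + B.b, A.c + B.c, A.d + B.d⟩⟩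

instance : Mul (Oct F) :=
  ⟨fun A B =>
    ⟨A.a * B.a + dot A.b B.c,
     A.a • B.b + B.d • A.b + cross A.c B.c,
     A.d • B.c + B.a • A.c + cross A.b B.b,
     A.d * B.d + dot A.c B.b⟩⟩

instance : SMul F (Oct F) :=
  ⟨fun t A => ⟨t * A.a, t • A.b, t • A.c, t * A.d⟩⟩

instance : One (Oct F) := ⟨⟨1, 0, 0, 1⟩⟩

/-- powers, via A^{n+1} = A · A^n (well-defined by power-associativity) -/
def pow (A : Oct F) : ℕ → Oct F
  | 0 => 1
  | n + 1 => A * pow A n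

/-- octonion conjugation -/
def conj (A : Oct F) : Oct F := ⟨A.d, -A.b, -A.c, A.a⟩

/-- the norm form -/
def norm (A : Oct F) : F := A.a * A.d - dot A.b A.c

theorem ext' {A B : Oct F} (ha : A.a = B.a) (hb : A.b = B.b) (hc : A.c = B.c)
    (hd : A.d = B.d) : A = B := by
  cases A; cases B; simp_all

@[simp] theorem mul_a' (A B : Oct F) : (A * B).a = A.a * B.a + dot A.b B.c := rfl
@[simp] theorem mul_b' (A B : Oct F) :
    (A * B).b = A.a • B.b + B.d • A.b + cross A.c B.c := rfl
@[simp] theorem mul_c' (A B : Oct F) :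
    (A * B).c = A.d • B.c + B.a • A.c + cross A.b B.b := rfl
@[simp] theorem mul_d' (A B : Oct F) : (A * B).d = A.d * B.d + dot A.c B.b := rfl
@[simp] theorem add_a' (A B : Oct F) : (A + B).a = A.a + B.a := rfl
@[simp] theorem add_b' (A B : Oct F) : (A + B).b = A.b + B.b := rfl
@[simp] theorem add_c' (A B : Oct F) : (A + B).c = A.c + B.c := rfl
@[simp] theorem add_d' (A B : Oct F) : (A + B).d = A.d + B.d := rfl
@[simp] theorem one_a' : (1 : Oct F).a = 1 := rfl
@[simp] theorem one_b' : (1 : Oct F).b = 0 := rfl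
@[simp] theorem one_c' : (1 : Oct F).c = 0 := rfl
@[simp] theorem one_d' : (1 : Oct F).d = 1 := rfl

theorem mul_one' (X : Oct F) : X * 1 = X := by
  apply ext' <;> simp [dot, cross] <;> funext i <;> fin_cases i <;>
    simp [cross, Matrix.vecHead, Matrix.vecTail]

theorem cross_self (x : Fin 3 → F) : cross x x = 0 := by
  funext i; fin_cases i <;> simp [cross] <;> ring

theorem sq_of_idem (X : Oct F) (ht : X.a + X.d = 1)
    (hn : X.a * X.d = dot X.b X.c) : X * X = X := by
  apply ext'
  · simp only [mul_a']; rw [← hn]; linear_combination X.a * ht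
  · rw [mul_b', cross_self, add_zero, ← add_smul, ht, one_smul]
  · rw [mul_c', cross_self, add_zero, ← add_smul, add_comm, ht, one_smul]
  · simp only [mul_d', dot]; unfold dot at hn; linear_combination X.d * ht - hn

theorem pow_idem (X : Oct F) (h : X * X = X) : ∀ n, 1 ≤ n → pow X n = X := by
  intro n hn
  induction n with
  | zero => omega
  | succ n ih =>
    rcases Nat.eq_or_lt_of_le hn with h1 | h1
    · have : n = 0 := by omega
      subst this; simp [pow, mul_one']
    · have : pow X n = X := ih (by omega)
      simp [pow, this, h]

end Oct

open Oct
theorem stmt_17 {F : Type*} [Field F] [IsAlgClosed F]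
    (k₁ k₂ : ℕ) (hk₁ : 2 ≤ k₁) (hk₂ : 2 ≤ k₂) (A : Oct F) :
    (∃ X Y : Oct F,
        A = (⟨0, ![1, 0, 0], 0, 0⟩ : Oct F) * pow X k₁
          + (⟨0, ![0, 1, 0], 0, 0⟩ : Oct F) * pow Y k₂)
      ↔ (A.b 2 = 0 ∧ A.d = 0) := by
  constructor
  · rintro ⟨X, Y, rfl⟩
    constructor
    · simp [cross, dot, Pi.add_apply, Pi.smul_apply, smul_eq_mul]
    · simp [dot]
  · rintro ⟨hb2, hd⟩
    refine ⟨⟨1 - A.b 0, ![A.b 0 * (1 - A.b 0), A.c 2 + 1, -(A.c 1)], ![1, 0, 0], A.b 0⟩,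
            ⟨1 - A.b 1, ![1, 0, A.c 0], ![A.b 1 * (1 - A.b 1), A.a - 1, 0], A.b 1⟩, ?_⟩
    rw [pow_idem _ (sq_of_idem _ (by ring) (by simp [dot]; ring)) k₁ (by omega),
        pow_idem _ (sq_of_idem _ (by ring) (by simp [dot]; ring)) k₂ (by omega)]
    apply ext'
    · simp [dot]
    · funext i; fin_cases i <;> simp [cross, hb2]
    · funext i; fin_cases i <;> simp [cross]
    · simp [dot, hd]
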